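/- Let T_p > 0, β > 0, and M ≥ 0. Suppose H : ℝ² × ℝ × ℝ → ℝ satisfies conditions (R1)–(R2), is T_p-periodic in its time argument (H((z, t + T_p), u, p) = H((z, t), u, p) for all z, t, u, p), and satisfies the monotonicity condition H((z,t), r, p) − H((z,t), s, p) ≥ β·(r − s) for all (z,t), p and all r ≥ s. Let v : ℝ² → ℝ be bounded and uniformly continuous on ℝ × [0, ∞) with |v| ≤ M, and a viscosity solution on ℝ × (0, ∞) of ∂_t f + H((z,t), f, ∂_z f) = 0. Then for every w ≥ 0, sup_{z ∈ ℝ} |v(z, w + T_p) − v(z, w)| ≤ 2·M·e^{−β·w}; consequently, for each τ ∈ [0, T_p] the sequence of functions z ↦ v(z, m·T_p + τ) converges uniformly on ℝ as m → ∞, and the limit function h(z, τ) := lim_{m → ∞} v(z, m·T_p + τ) satisfies h(z, 0) = h(z, T_p) for all z. -/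

import Mathlib

open Set Filter

/-- `u` is a viscosity subsolution of `F (y, u y, Du y) = 0` on the open set `U ⊆ ℝ²`. -/
def IsViscositySubsolnOn (F : (ℝ × ℝ) → ℝ → (ℝ × ℝ) → ℝ) (u : ℝ × ℝ → ℝ)
    (U : Set (ℝ × ℝ)) : Prop :=
  ContinuousOn u U ∧
    ∀ φ : (ℝ × ℝ) → ℝ, ContDiff ℝ 2 φ → ∀ y ∈ U,
      IsLocalMax (fun p => u p - φ p) y →
        F y (u y) (fderiv ℝ φ y (1, 0), fderiv ℝ φ y (0, 1)) ≤ 0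

/-- `u` is a viscosity supersolution of `F (y, u y, Du y) = 0` on the open set `U ⊆ ℝ²`. -/
def IsViscositySupersolnOn (F : (ℝ × ℝ) → ℝ → (ℝ × ℝ) → ℝ) (u : ℝ × ℝ → ℝ)
    (U : Set (ℝ × ℝ)) : Prop :=
  ContinuousOn u U ∧
    ∀ φ : (ℝ × ℝ) → ℝ, ContDiff ℝ 2 φ → ∀ y ∈ U,
      IsLocalMin (fun p => u p - φ p) y →
        0 ≤ F y (u y) (fderiv ℝ φ y (1, 0), fderiv ℝ φ y (0, 1))

/-- `u` is a viscosity solution of `F (y, u y, Du y) = 0` on the open set `U ⊆ ℝ²`. -/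
def IsViscositySolnOn (F : (ℝ × ℝ) → ℝ → (ℝ × ℝ) → ℝ) (u : ℝ × ℝ → ℝ)
    (U : Set (ℝ × ℝ)) : Prop :=
  IsViscositySubsolnOn F u U ∧ IsViscositySupersolnOn F u U

/-- A modulus of continuity. -/
def IsModulus (ω : ℝ → ℝ) : Prop :=
  Monotone ω ∧ ω 0 = 0 ∧ (∀ s, 0 ≤ s → 0 ≤ ω s) ∧
    Tendsto ω (nhdsWithin 0 (Ioi 0)) (nhds 0)

/-- Conditions (R1)–(R2) on a Hamiltonian `H (y, u, p)`. -/
def SatisfiesR1R2 (H : (ℝ × ℝ) → ℝ → ℝ → ℝ) : Prop :=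
  UniformContinuous (fun x : (ℝ × ℝ) × ℝ × ℝ => H x.1 x.2.1 x.2.2) ∧
    ∃ ω : ℝ → ℝ, IsModulus ω ∧
      (∀ (y₁ y₂ : ℝ × ℝ) (u p₁ p₂ : ℝ),
        |H y₁ u p₁ - H y₂ u p₂| ≤ ω (‖y₁ - y₂‖ + |p₁ - p₂|)) ∧
      (∀ (y₁ y₂ : ℝ × ℝ) (u p : ℝ),
        |H y₁ u p - H y₂ u p| ≤ ω (‖y₁ - y₂‖ * (1 + |p|)))

/-!
Because `H` is `T_p`-periodic in time, `v(·, · + T_p)` is again a viscosity solution, so the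
estimate is a comparison principle between two bounded solutions whose difference is at most `2M`
at time `0`: the monotonicity `β` of `H` in `u` makes that difference decay like `2M e^{-β t}`.
The comparison is proved by doubling the variables: at an interior maximum of the penalised
difference, the sub- and supersolution inequalities for the two test functions contradict the
`β`-monotonicity, and a maximum on `t = 0` is excluded by the initial bound and uniform continuity.
The decay makes `m ↦ v(·, m T_p + τ)` uniformly Cauchy at the geometric rate `e^{-β T_p}`, and the
limits for `τ = 0` and `τ = T_p` agree because the two sequences are shifts of each other.
-/

open Topology Real

theorem IsViscositySubsolnOn.comp_add_const {F : (ℝ × ℝ) → ℝ → (ℝ × ℝ) → ℝ} {u : ℝ × ℝ → ℝ}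
    {U V : Set (ℝ × ℝ)} {a : ℝ × ℝ} (hu : IsViscositySubsolnOn F u V)
    (hUV : MapsTo (· + a) U V) (hF : ∀ y r p, F (y + a) r p = F y r p) :
    IsViscositySubsolnOn F (fun y => u (y + a)) U := by
  refine ⟨hu.1.comp (continuous_add_const a).continuousOn hUV, fun φ hφ y hy hmax => ?_⟩
  have hmax' : IsLocalMax (fun q => u q - φ (q - a)) (y + a) := by
    rw [← add_sub_cancel_right y a] at hmax
    simpa [Function.comp_def] using
      hmax.comp_continuous (g := (· - a)) (b := y + a) (continuous_sub_right a).continuousAt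
  have := hu.2 (fun q => φ (q - a)) (hφ.comp (contDiff_id.sub contDiff_const)) _ (hUV hy) hmax'
  simpa [fderiv_comp_sub, hF] using this

theorem IsViscositySupersolnOn.comp_add_const {F : (ℝ × ℝ) → ℝ → (ℝ × ℝ) → ℝ}
    {u : ℝ × ℝ → ℝ} {U V : Set (ℝ × ℝ)} {a : ℝ × ℝ} (hu : IsViscositySupersolnOn F u V)
    (hUV : MapsTo (· + a) U V) (hF : ∀ y r p, F (y + a) r p = F y r p) :
    IsViscositySupersolnOn F (fun y => u (y + a)) U := by
  refine ⟨hu.1.comp (continuous_add_const a).continuousOn hUV, fun φ hφ y hy hmin => ?_⟩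
  have hmin' : IsLocalMin (fun q => u q - φ (q - a)) (y + a) := by
    rw [← add_sub_cancel_right y a] at hmin
    simpa [Function.comp_def] using
      hmin.comp_continuous (g := (· - a)) (b := y + a) (continuous_sub_right a).continuousAt
  have := hu.2 (fun q => φ (q - a)) (hφ.comp (contDiff_id.sub contDiff_const)) _ (hUV hy) hmin'
  simpa [fderiv_comp_sub, hF] using this

theorem IsViscositySolnOn.comp_add_const {F : (ℝ × ℝ) → ℝ → (ℝ × ℝ) → ℝ} {u : ℝ × ℝ → ℝ}
    {U V : Set (ℝ × ℝ)} {a : ℝ × ℝ} (hu : IsViscositySolnOn F u V)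
    (hUV : MapsTo (· + a) U V) (hF : ∀ y r p, F (y + a) r p = F y r p) :
    IsViscositySolnOn F (fun y => u (y + a)) U :=
  ⟨hu.1.comp_add_const hUV hF, hu.2.comp_add_const hUV hF⟩

theorem ContinuousOn.exists_isMaxOn_of_isBounded {X α : Type*} [PseudoMetricSpace X] [ProperSpace X]
    [LinearOrder α] [TopologicalSpace α] [ClosedIciTopology α] {s : Set X} {f : X → α} {c : α}
    (hf : ContinuousOn f s) (hs : IsClosed s) {x₀ : X} (hx₀ : x₀ ∈ s) (hc : c ≤ f x₀)
    (hbdd : Bornology.IsBounded {x ∈ s | c ≤ f x}) : ∃ x ∈ s, IsMaxOn f s x ∧ c ≤ f x := by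
  have hfar : ∀ᶠ x in cocompact X ⊓ 𝓟 s, f x ≤ f x₀ := by
    refine mem_inf_principal.mpr (mem_of_superset hbdd.isCompact_closure.compl_mem_cocompact ?_)
    intro x hx hxs
    exact ((not_le.mp fun h => hx (subset_closure ⟨hxs, h⟩)).le).trans hc
  obtain ⟨x, hxs, hmax⟩ := hf.exists_isMaxOn' hs hx₀ hfar
  exact ⟨x, hxs, hmax, hc.trans (hmax hx₀)⟩

theorem fderiv_fst_add_snd_partials {f g : ℝ → ℝ} {f' g' : ℝ} {y : ℝ × ℝ}
    (hf : HasDerivAt f f' y.1) (hg : HasDerivAt g g' y.2) :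
    (fderiv ℝ (fun p : ℝ × ℝ => f p.1 + g p.2) y (1, 0),
      fderiv ℝ (fun p : ℝ × ℝ => f p.1 + g p.2) y (0, 1)) = (f', g') := by
  have h := (hf.hasFDerivAt.comp y hasFDerivAt_fst).add (hg.hasFDerivAt.comp y hasFDerivAt_snd)
  rw [show (fun p : ℝ × ℝ => f p.1 + g p.2) = f ∘ Prod.fst + g ∘ Prod.snd from rfl, h.fderiv]
  simp

theorem abs_le_one_add_div_of_mul_sq_le {a c B : ℝ} (hc : 0 < c) (h : c * a ^ 2 ≤ B) :
    |a| ≤ 1 + B / c := by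
  have : a ^ 2 ≤ B / c := (le_div_iff₀' hc).mpr h
  nlinarith [sq_abs a, sq_nonneg (|a| - 1)]

noncomputable section

/-- In `penalty K β ε δ p q`, `K e^{-β t}` is the claimed bound on `u₁ - u₂`, the term
`ε |p - q|²` forces the two points of a maximum together for large `ε`, and `δ (z² + t)` makes
the maximum exist on the unbounded half-plane. -/
def penalty (K β ε δ : ℝ) (p q : ℝ × ℝ) : ℝ :=
  (ε * (p.1 - q.1) ^ 2 + δ * p.1 ^ 2) + (K * exp (-(β * p.2)) + ε * (p.2 - q.2) ^ 2 + δ * p.2)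

def doublingFun (u₁ u₂ : ℝ × ℝ → ℝ) (K β ε δ : ℝ) (x : (ℝ × ℝ) × (ℝ × ℝ)) : ℝ :=
  u₁ x.1 - u₂ x.2 - penalty K β ε δ x.1 x.2

theorem contDiff_penalty_left (K β ε δ : ℝ) (q : ℝ × ℝ) :
    ContDiff ℝ 2 (penalty K β ε δ · q) := by
  unfold penalty; fun_prop

theorem contDiff_neg_penalty_right (K β ε δ : ℝ) (p : ℝ × ℝ) :
    ContDiff ℝ 2 (fun q => -penalty K β ε δ p q) := by
  unfold penalty; fun_prop

theorem penalty_partials_left (K β ε δ : ℝ) (q y : ℝ × ℝ) :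
    (fderiv ℝ (penalty K β ε δ · q) y (1, 0), fderiv ℝ (penalty K β ε δ · q) y (0, 1)) =
      (2 * ε * (y.1 - q.1) + 2 * δ * y.1,
        -(K * β * exp (-(β * y.2))) + 2 * ε * (y.2 - q.2) + δ) := by
  refine fderiv_fst_add_snd_partials (f := fun s => ε * (s - q.1) ^ 2 + δ * s ^ 2)
    (g := fun t => K * exp (-(β * t)) + ε * (t - q.2) ^ 2 + δ * t) ?_ ?_
  · refine ((((hasDerivAt_id' y.1).sub_const q.1).pow 2 |>.const_mul ε).add
      (((hasDerivAt_id' y.1).pow 2).const_mul δ)).congr_deriv ?_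
    simp only [Nat.cast_ofNat, Nat.add_one_sub_one, pow_one, mul_one]
    ring
  · refine (((((hasDerivAt_id' y.2).const_mul β).neg.exp.const_mul K).add
      (((hasDerivAt_id' y.2).sub_const q.2).pow 2 |>.const_mul ε)).add
      ((hasDerivAt_id' y.2).const_mul δ)).congr_deriv ?_
    simp only [Pi.neg_apply, mul_one, mul_neg, Nat.cast_ofNat, Nat.add_one_sub_one, pow_one, add_left_inj]
    ring

theorem neg_penalty_partials_right (K β ε δ : ℝ) (p y : ℝ × ℝ) :
    (fderiv ℝ (fun q => -penalty K β ε δ p q) y (1, 0),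
      fderiv ℝ (fun q => -penalty K β ε δ p q) y (0, 1)) =
      (2 * ε * (p.1 - y.1), 2 * ε * (p.2 - y.2)) := by
  have hsep : (fun q => -penalty K β ε δ p q) = fun q : ℝ × ℝ =>
      -(ε * (p.1 - q.1) ^ 2 + δ * p.1 ^ 2) +
        -(K * exp (-(β * p.2)) + ε * (p.2 - q.2) ^ 2 + δ * p.2) := by
    funext q; simp only [penalty]; ring
  rw [hsep]
  refine fderiv_fst_add_snd_partials (f := fun s => -(ε * (p.1 - s) ^ 2 + δ * p.1 ^ 2))
    (g := fun t => -(K * exp (-(β * p.2)) + ε * (p.2 - t) ^ 2 + δ * p.2)) ?_ ?_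
  · refine (((hasDerivAt_id' y.1).const_sub p.1).pow 2 |>.const_mul ε |>.add_const _).neg
      |>.congr_deriv ?_
    simp only [Nat.cast_ofNat, Nat.add_one_sub_one, pow_one, mul_neg, mul_one, neg_neg]
    ring
  · refine (((hasDerivAt_id' y.2).const_sub p.2).pow 2 |>.const_mul ε |>.const_add _
      |>.add_const _).neg |>.congr_deriv ?_
    simp only [Nat.cast_ofNat, Nat.add_one_sub_one, pow_one, mul_neg, mul_one, neg_neg]
    ring

section Comparison

variable {u₁ u₂ : ℝ × ℝ → ℝ} {K β ε δ M : ℝ}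

theorem penalty_terms_le_of_nonneg_doublingFun (hb₁ : ∀ p ∈ univ ×ˢ Ici (0 : ℝ), |u₁ p| ≤ M)
    (hb₂ : ∀ p ∈ univ ×ˢ Ici (0 : ℝ), |u₂ p| ≤ M) (hK : 0 ≤ K) (hε : 0 ≤ ε) (hδ : 0 ≤ δ)
    {p q : ℝ × ℝ} (hp : p ∈ univ ×ˢ Ici (0 : ℝ)) (hq : q ∈ univ ×ˢ Ici (0 : ℝ))
    (h : 0 ≤ doublingFun u₁ u₂ K β ε δ (p, q)) :
    ε * (p.1 - q.1) ^ 2 ≤ 2 * M ∧ ε * (p.2 - q.2) ^ 2 ≤ 2 * M ∧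
      δ * p.1 ^ 2 ≤ 2 * M ∧ δ * p.2 ≤ 2 * M := by
  have hdiff : u₁ p - u₂ q ≤ 2 * M := by
    linarith [(abs_le.mp (hb₁ p hp)).2, (abs_le.mp (hb₂ q hq)).1]
  have hp₂ : 0 ≤ p.2 := hp.2
  have : 0 ≤ K * exp (-(β * p.2)) := by positivity
  have : 0 ≤ ε * (p.1 - q.1) ^ 2 := by positivity
  have : 0 ≤ ε * (p.2 - q.2) ^ 2 := by positivity
  have : 0 ≤ δ * p.1 ^ 2 := by positivity
  have : 0 ≤ δ * p.2 := by positivity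
  simp only [doublingFun, penalty] at h
  refine ⟨?_, ?_, ?_, ?_⟩ <;> linarith

theorem le_sub_of_le_doublingFun (hε : 0 ≤ ε) (hδ : 0 ≤ δ) {p q : ℝ × ℝ} (hp : 0 ≤ p.2) {c : ℝ}
    (h : c ≤ doublingFun u₁ u₂ K β ε δ (p, q)) : K * exp (-(β * p.2)) + c ≤ u₁ p - u₂ q := by
  have : 0 ≤ ε * (p.1 - q.1) ^ 2 + δ * p.1 ^ 2 + ε * (p.2 - q.2) ^ 2 + δ * p.2 := by positivity
  simp only [doublingFun, penalty] at h
  linarith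

theorem dist_lt_and_abs_le_of_nonneg_doublingFun (hb₁ : ∀ p ∈ univ ×ˢ Ici (0 : ℝ), |u₁ p| ≤ M)
    (hb₂ : ∀ p ∈ univ ×ˢ Ici (0 : ℝ), |u₂ p| ≤ M) (hK : 0 ≤ K) (hε : 0 < ε) (hδ : 0 ≤ δ)
    {r s : ℝ} (hr : 0 < r) (hs : 0 ≤ s) (hεr : 2 * M < ε * r ^ 2) (hδs : 8 * M * δ ≤ s ^ 2)
    {p q : ℝ × ℝ} (hp : p ∈ univ ×ˢ Ici (0 : ℝ)) (hq : q ∈ univ ×ˢ Ici (0 : ℝ))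
    (h : 0 ≤ doublingFun u₁ u₂ K β ε δ (p, q)) : dist p q < r ∧ |2 * δ * p.1| ≤ s := by
  obtain ⟨h₁, h₂, h₃, -⟩ := penalty_terms_le_of_nonneg_doublingFun hb₁ hb₂ hK hε.le hδ hp hq h
  refine ⟨?_, abs_le_of_sq_le_sq ?_ hs⟩
  · rw [Prod.dist_eq, max_lt_iff, Real.dist_eq, Real.dist_eq]
    constructor <;> refine abs_lt_of_sq_lt_sq (lt_of_mul_lt_mul_left ?_ hε.le) hr.le <;> linarith
  · nlinarith [mul_le_mul_of_nonneg_left h₃ (by positivity : (0 : ℝ) ≤ 4 * δ)]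

theorem isBounded_nonneg_doublingFun (hb₁ : ∀ p ∈ univ ×ˢ Ici (0 : ℝ), |u₁ p| ≤ M)
    (hb₂ : ∀ p ∈ univ ×ˢ Ici (0 : ℝ), |u₂ p| ≤ M) (hK : 0 ≤ K) (hε : 0 < ε) (hδ : 0 < δ) :
    Bornology.IsBounded {x ∈ (univ ×ˢ Ici (0 : ℝ)) ×ˢ (univ ×ˢ Ici (0 : ℝ)) |
      0 ≤ doublingFun u₁ u₂ K β ε δ x} := by
  refine isBounded_iff_forall_norm_le.mpr ⟨2 + 2 * M / δ + 2 * M / ε, ?_⟩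
  rintro ⟨p, q⟩ ⟨⟨hp, hq⟩, h⟩
  obtain ⟨h₁, h₂, h₃, h₄⟩ :=
    penalty_terms_le_of_nonneg_doublingFun (p := p) (q := q) hb₁ hb₂ hK hε.le hδ.le hp hq h
  have hM : 0 ≤ M := (abs_nonneg _).trans (hb₁ p hp)
  have hd₁ := abs_le_one_add_div_of_mul_sq_le hε h₁
  have hd₂ := abs_le_one_add_div_of_mul_sq_le hε h₂
  have hp₁ := abs_le_one_add_div_of_mul_sq_le hδ h₃
  have hp₂ : |p.2| ≤ 2 * M / δ := by
    rw [abs_of_nonneg hp.2]; exact (le_div_iff₀' hδ).mpr h₄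
  have hq₁ : |q.1| ≤ |p.1| + |p.1 - q.1| := by
    simpa using abs_sub (p.1) (p.1 - q.1)
  have hq₂ : |q.2| ≤ |p.2| + |p.2 - q.2| := by
    simpa using abs_sub (p.2) (p.2 - q.2)
  have : 0 ≤ 2 * M / ε := by positivity
  have : 0 ≤ 2 * M / δ := by positivity
  simp only [norm_prod_le_iff, Real.norm_eq_abs]
  refine ⟨⟨?_, ?_⟩, ?_, ?_⟩ <;> linarith

theorem exists_isMaxOn_doublingFun (hc₁ : ContinuousOn u₁ (univ ×ˢ Ici (0 : ℝ)))
    (hc₂ : ContinuousOn u₂ (univ ×ˢ Ici (0 : ℝ))) (hb₁ : ∀ p ∈ univ ×ˢ Ici (0 : ℝ), |u₁ p| ≤ M)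
    (hb₂ : ∀ p ∈ univ ×ˢ Ici (0 : ℝ), |u₂ p| ≤ M) (hK : 0 ≤ K) (hε : 0 < ε) (hδ : 0 < δ)
    {c : ℝ} (hc : 0 ≤ c) {x₀ : (ℝ × ℝ) × (ℝ × ℝ)}
    (hx₀ : x₀ ∈ (univ ×ˢ Ici (0 : ℝ)) ×ˢ (univ ×ˢ Ici (0 : ℝ)))
    (h₀ : c ≤ doublingFun u₁ u₂ K β ε δ x₀) :
    ∃ x ∈ (univ ×ˢ Ici (0 : ℝ)) ×ˢ (univ ×ˢ Ici (0 : ℝ)),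
      IsMaxOn (doublingFun u₁ u₂ K β ε δ) ((univ ×ˢ Ici (0 : ℝ)) ×ˢ (univ ×ˢ Ici (0 : ℝ))) x ∧
        c ≤ doublingFun u₁ u₂ K β ε δ x := by
  have hpen : Continuous fun x : (ℝ × ℝ) × (ℝ × ℝ) => penalty K β ε δ x.1 x.2 := by
    unfold penalty; fun_prop
  refine ContinuousOn.exists_isMaxOn_of_isBounded ?_
    ((isClosed_univ.prod isClosed_Ici).prod (isClosed_univ.prod isClosed_Ici)) hx₀ h₀
    ((isBounded_nonneg_doublingFun hb₁ hb₂ hK hε hδ).subset fun x hx => ⟨hx.1, hc.trans hx.2⟩)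
  exact ((hc₁.comp continuousOn_fst fun x hx => hx.1).sub
    (hc₂.comp continuousOn_snd fun x hx => hx.2)).sub hpen.continuousOn

theorem doubling_inequality_of_isMaxOn {H : (ℝ × ℝ) → ℝ → ℝ → ℝ} {ω : ℝ → ℝ}
    (hHω : ∀ (y₁ y₂ : ℝ × ℝ) (u p₁ p₂ : ℝ), |H y₁ u p₁ - H y₂ u p₂| ≤ ω (‖y₁ - y₂‖ + |p₁ - p₂|))
    (hmono : ∀ (y : ℝ × ℝ) (p r s : ℝ), s ≤ r → β * (r - s) ≤ H y r p - H y s p)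
    (hsub : IsViscositySubsolnOn (fun y q p => p.2 + H y q p.1) u₁ (univ ×ˢ Ioi 0))
    (hsup : IsViscositySupersolnOn (fun y q p => p.2 + H y q p.1) u₂ (univ ×ˢ Ioi 0))
    {b c : ℝ × ℝ} (hb : 0 < b.2) (hc : 0 < c.2)
    (hmax : IsMaxOn (doublingFun u₁ u₂ K β ε δ) ((univ ×ˢ Ici 0) ×ˢ (univ ×ˢ Ici 0)) (b, c))
    (hord : u₂ c ≤ u₁ b) :
    β * (u₁ b - u₂ c) + δ ≤ K * β * exp (-(β * b.2)) + ω (‖b - c‖ + |2 * δ * b.1|) := by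
  have hnhds : ∀ {y : ℝ × ℝ}, 0 < y.2 → univ ×ˢ Ici (0 : ℝ) ∈ 𝓝 y := fun hy =>
    prod_mem_nhds univ_mem (Ici_mem_nhds hy)
  have hmax₁ : IsLocalMax (fun p => u₁ p - penalty K β ε δ p c) b := by
    refine IsMaxOn.isLocalMax (fun p hp => ?_) (hnhds hb)
    have : doublingFun u₁ u₂ K β ε δ (p, c) ≤ doublingFun u₁ u₂ K β ε δ (b, c) :=
      hmax (mk_mem_prod hp ⟨mem_univ _, hc.le⟩)
    show u₁ p - penalty K β ε δ p c ≤ u₁ b - penalty K β ε δ b c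
    simp only [doublingFun] at this
    linarith
  have hmin₂ : IsLocalMin (fun q => u₂ q - -penalty K β ε δ b q) c := by
    refine IsMinOn.isLocalMin (fun q hq => ?_) (hnhds hc)
    have : doublingFun u₁ u₂ K β ε δ (b, q) ≤ doublingFun u₁ u₂ K β ε δ (b, c) :=
      hmax (mk_mem_prod ⟨mem_univ _, hb.le⟩ hq)
    show u₂ c - -penalty K β ε δ b c ≤ u₂ q - -penalty K β ε δ b q
    simp only [doublingFun] at this
    linarith
  have E₁ := hsub.2 _ (contDiff_penalty_left K β ε δ c) b ⟨mem_univ _, hb⟩ hmax₁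
  have E₂ := hsup.2 _ (contDiff_neg_penalty_right K β ε δ b) c ⟨mem_univ _, hc⟩ hmin₂
  rw [penalty_partials_left] at E₁
  rw [neg_penalty_partials_right] at E₂
  dsimp only at E₁ E₂
  set p₁ := 2 * ε * (b.1 - c.1) + 2 * δ * b.1
  have E₃ := hmono b p₁ _ _ hord
  have E₄ := (abs_le.mp (hHω b c (u₂ c) p₁ (2 * ε * (b.1 - c.1)))).1
  rw [add_sub_cancel_left] at E₄
  linarith

theorem sub_le_of_boundary {ρ η : ℝ} (hK : 0 ≤ K) (hβ : 0 ≤ β)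
    (hρ₁ : ∀ p ∈ univ ×ˢ Ici (0 : ℝ), ∀ q ∈ univ ×ˢ Ici (0 : ℝ),
      dist p q ≤ ρ → dist (u₁ p) (u₁ q) ≤ η)
    (hρ₂ : ∀ p ∈ univ ×ˢ Ici (0 : ℝ), ∀ q ∈ univ ×ˢ Ici (0 : ℝ),
      dist p q ≤ ρ → dist (u₂ p) (u₂ q) ≤ η)
    (hinit : ∀ z : ℝ, u₁ (z, 0) - u₂ (z, 0) ≤ K) {b c : ℝ × ℝ} (hb : 0 ≤ b.2) (hc : 0 ≤ c.2)
    (hbc : dist b c ≤ ρ) (hbd : b.2 = 0 ∨ c.2 = 0) :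
    u₁ b - u₂ c ≤ K * exp (-(β * b.2)) + K * β * ρ + 2 * η := by
  rw [Prod.dist_eq, max_le_iff, Real.dist_eq, Real.dist_eq] at hbc
  have hρ : 0 ≤ ρ := (abs_nonneg _).trans hbc.1
  have hb' : b.2 ≤ ρ := by
    rcases hbd with h | h <;> simp only [h, sub_zero, abs_of_nonneg hb] at hbc ⊢ <;> linarith
  have hc' : c.2 ≤ ρ := by
    rcases hbd with h | h <;> simp only [h, zero_sub, abs_neg, abs_of_nonneg hc] at hbc ⊢ <;>
      linarith
  have h₁ := hρ₁ b ⟨mem_univ _, hb⟩ (b.1, 0) ⟨mem_univ _, mem_Ici.mpr le_rfl⟩ (by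
    simp [Prod.dist_eq, abs_of_nonneg hb, hb', hρ])
  have h₂ := hρ₂ (b.1, 0) ⟨mem_univ _, mem_Ici.mpr le_rfl⟩ c ⟨mem_univ _, hc⟩ (by
    simp [Prod.dist_eq, Real.dist_eq, abs_of_nonneg hc, hc', hbc.1])
  rw [Real.dist_eq] at h₁ h₂
  have hexp : K - K * β * ρ ≤ K * exp (-(β * b.2)) := by
    nlinarith [add_one_le_exp (-(β * b.2)), mul_le_mul_of_nonneg_left hb' hβ]
  linarith [(abs_le.mp h₁).2, (abs_le.mp h₂).2, hinit b.1]

theorem sub_le_mul_exp_of_viscosity {H : (ℝ × ℝ) → ℝ → ℝ → ℝ} {ω : ℝ → ℝ} (hβ : 0 < β)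
    (hK : 0 ≤ K) (hω : IsModulus ω)
    (hHω : ∀ (y₁ y₂ : ℝ × ℝ) (u p₁ p₂ : ℝ), |H y₁ u p₁ - H y₂ u p₂| ≤ ω (‖y₁ - y₂‖ + |p₁ - p₂|))
    (hmono : ∀ (y : ℝ × ℝ) (p r s : ℝ), s ≤ r → β * (r - s) ≤ H y r p - H y s p)
    (hsub : IsViscositySubsolnOn (fun y q p => p.2 + H y q p.1) u₁ (univ ×ˢ Ioi 0))
    (hsup : IsViscositySupersolnOn (fun y q p => p.2 + H y q p.1) u₂ (univ ×ˢ Ioi 0))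
    (hb₁ : ∀ p ∈ univ ×ˢ Ici (0 : ℝ), |u₁ p| ≤ M) (hb₂ : ∀ p ∈ univ ×ˢ Ici (0 : ℝ), |u₂ p| ≤ M)
    (huc₁ : UniformContinuousOn u₁ (univ ×ˢ Ici (0 : ℝ)))
    (huc₂ : UniformContinuousOn u₂ (univ ×ˢ Ici (0 : ℝ)))
    (hinit : ∀ z : ℝ, u₁ (z, 0) - u₂ (z, 0) ≤ K) {z t : ℝ} (ht : 0 ≤ t) :
    u₁ (z, t) - u₂ (z, t) ≤ K * exp (-(β * t)) := by
  by_contra! hgt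
  set S := u₁ (z, t) - u₂ (z, t) - K * exp (-(β * t))
  have hS : 0 < S := sub_pos.mpr hgt
  have hM : 0 ≤ M := (abs_nonneg _).trans (hb₁ (z, t) ⟨mem_univ _, ht⟩)
  obtain ⟨s₀, hωs₀, hs₀⟩ := ((hω.2.2.2.eventually_lt_const (by positivity : 0 < β * S / 2)).and
    self_mem_nhdsWithin).exists
  obtain ⟨ρ₁, hρ₁, hu₁⟩ := Metric.uniformContinuousOn_iff_le.mp huc₁ (S / 8) (by positivity)
  obtain ⟨ρ₂, hρ₂, hu₂⟩ := Metric.uniformContinuousOn_iff_le.mp huc₂ (S / 8) (by positivity)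
  obtain ⟨r, hr, hrρ₁, hrρ₂, hrs₀, hKr⟩ :
      ∃ r > 0, r ≤ ρ₁ ∧ r ≤ ρ₂ ∧ r ≤ s₀ / 4 ∧ K * β * r < S / 8 :=
    Eventually.exists_gt <| (eventually_le_nhds hρ₁).and <| (eventually_le_nhds hρ₂).and <|
      (eventually_le_nhds (by positivity)).and <|
      ((continuous_const_mul (K * β)).tendsto' 0 0 (mul_zero _)).eventually_lt_const (by positivity)
  obtain ⟨δ, hδ, hδzt, hδs₀⟩ : ∃ δ > 0, δ * (z ^ 2 + t) < S / 2 ∧ 8 * M * δ < (s₀ / 2) ^ 2 :=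
    Eventually.exists_gt <|
      (((continuous_mul_const _).tendsto' 0 0 (zero_mul _)).eventually_lt_const (by positivity)).and
      (((continuous_const_mul _).tendsto' 0 0 (mul_zero _)).eventually_lt_const (by positivity))
  obtain ⟨ε, hε, hεr⟩ : ∃ ε > 0, 2 * M < ε * r ^ 2 :=
    ⟨(2 * M + 1) / r ^ 2, by positivity, by rw [div_mul_cancel₀ _ (by positivity)]; linarith⟩
  have hstart : S / 2 ≤ doublingFun u₁ u₂ K β ε δ ((z, t), (z, t)) := by
    simp only [doublingFun, penalty, sub_self]
    linarith
  obtain ⟨⟨b, c⟩, ⟨hbD, hcD⟩, hmax, hΦ⟩ := exists_isMaxOn_doublingFun huc₁.continuousOn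
    huc₂.continuousOn hb₁ hb₂ hK hε hδ (by positivity) (x₀ := ((z, t), (z, t)))
    ⟨⟨mem_univ _, ht⟩, ⟨mem_univ _, ht⟩⟩ hstart
  have hgap := le_sub_of_le_doublingFun hε.le hδ.le hbD.2 hΦ
  obtain ⟨hbc, h2δ⟩ := dist_lt_and_abs_le_of_nonneg_doublingFun hb₁ hb₂ hK hε hδ.le hr
    (by positivity) hεr hδs₀.le hbD hcD (by linarith)
  by_cases hbd : b.2 = 0 ∨ c.2 = 0
  · have := sub_le_of_boundary hK hβ.le (fun p hp q hq h => hu₁ p hp q hq (h.trans hrρ₁))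
      (fun p hp q hq h => hu₂ p hp q hq (h.trans hrρ₂)) hinit hbD.2 hcD.2 hbc.le hbd
    linarith
  · obtain ⟨hb0, hc0⟩ := not_or.mp hbd
    have key := doubling_inequality_of_isMaxOn hHω hmono hsub hsup (hbD.2.lt_of_ne' hb0)
      (hcD.2.lt_of_ne' hc0) hmax (by linarith [mul_nonneg hK (exp_pos (-(β * b.2))).le])
    have hωle : ω (‖b - c‖ + |2 * δ * b.1|) ≤ ω s₀ := hω.1 (by rw [← dist_eq_norm]; linarith)
    linarith [mul_le_mul_of_nonneg_left hgap hβ.le]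

end Comparison

end

theorem abs_sub_time_shift_le_of_periodic {H : (ℝ × ℝ) → ℝ → ℝ → ℝ} {ω : ℝ → ℝ} {T β M : ℝ}
    (hT : 0 ≤ T) (hβ : 0 < β) (hM : 0 ≤ M) (hω : IsModulus ω)
    (hHω : ∀ (y₁ y₂ : ℝ × ℝ) (u p₁ p₂ : ℝ), |H y₁ u p₁ - H y₂ u p₂| ≤ ω (‖y₁ - y₂‖ + |p₁ - p₂|))
    (hper : ∀ (z t u p : ℝ), H (z, t + T) u p = H (z, t) u p)
    (hmono : ∀ (y : ℝ × ℝ) (p r s : ℝ), s ≤ r → β * (r - s) ≤ H y r p - H y s p)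
    {v : ℝ × ℝ → ℝ} (hvb : ∀ p ∈ univ ×ˢ Ici (0 : ℝ), |v p| ≤ M)
    (hvc : UniformContinuousOn v (univ ×ˢ Ici (0 : ℝ)))
    (hsol : IsViscositySolnOn (fun y q p => p.2 + H y q p.1) v (univ ×ˢ Ioi (0 : ℝ)))
    {w : ℝ} (hw : 0 ≤ w) (z : ℝ) : |v (z, w + T) - v (z, w)| ≤ 2 * M * exp (-(β * w)) := by
  set a : ℝ × ℝ := (0, T)
  have ha : ∀ y : ℝ × ℝ, y + a = (y.1, y.2 + T) := fun y => by ext <;> simp [a]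
  have hshift : IsViscositySolnOn (fun y q p => p.2 + H y q p.1) (fun y => v (y + a))
      (univ ×ˢ Ioi 0) :=
    hsol.comp_add_const
      (fun y hy => ⟨mem_univ _, by simpa [ha] using add_pos_of_pos_of_nonneg hy.2 hT⟩)
      (fun y r p => by simp only [ha, hper])
  have hmaps : MapsTo (· + a) (univ ×ˢ Ici (0 : ℝ)) (univ ×ˢ Ici 0) := fun y hy =>
    ⟨mem_univ _, by simpa [ha] using add_nonneg hy.2 hT⟩
  have hbshift : ∀ p ∈ univ ×ˢ Ici (0 : ℝ), |v (p + a)| ≤ M := fun p hp => hvb _ (hmaps hp)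
  have hucshift : UniformContinuousOn (fun y => v (y + a)) (univ ×ˢ Ici 0) :=
    hvc.comp (uniformContinuous_id.add_const a).uniformContinuousOn hmaps
  have hinit : ∀ z : ℝ, |v ((z, 0) + a) - v (z, 0)| ≤ 2 * M := fun z => by
    have h0 : ((z, 0) : ℝ × ℝ) ∈ univ ×ˢ Ici (0 : ℝ) := ⟨mem_univ _, mem_Ici.mpr le_rfl⟩
    linarith [abs_sub (v ((z, 0) + a)) (v (z, 0)), hbshift _ h0, hvb _ h0]
  have h₁ := sub_le_mul_exp_of_viscosity (K := 2 * M) hβ (by positivity) hω hHω hmono hshift.1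
    hsol.2 hbshift hvb hucshift hvc (fun z => (abs_le.mp (hinit z)).2) (z := z) hw
  have h₂ := sub_le_mul_exp_of_viscosity (K := 2 * M) hβ (by positivity) hω hHω hmono hsol.1
    hshift.2 hvb hbshift hvc hucshift (fun z => by linarith [(abs_le.mp (hinit z)).1]) (z := z) hw
  simp only [ha] at h₁ h₂
  exact abs_le.mpr ⟨by linarith, h₁⟩

theorem tendstoUniformly_limUnder_of_dist_le_geometric {ι E : Type*} [PseudoMetricSpace E]
    [CompleteSpace E] [Nonempty E] {F : ℕ → ι → E} {C r : ℝ} (hr₀ : 0 ≤ r) (hr₁ : r < 1)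
    (hF : ∀ m x, dist (F m x) (F (m + 1) x) ≤ C * r ^ m) :
    TendstoUniformly F (fun x => limUnder atTop (F · x)) atTop := by
  have hlim : ∀ x, Tendsto (F · x) atTop (𝓝 (limUnder atTop (F · x))) := fun x =>
    (cauchySeq_of_le_geometric r C hr₁ (hF · x)).tendsto_limUnder
  have hbound : Tendsto (fun m : ℕ => C * r ^ m / (1 - r)) atTop (𝓝 0) := by
    simpa using ((tendsto_pow_atTop_nhds_zero_of_lt_one hr₀ hr₁).const_mul C).div_const (1 - r)
  rw [Metric.tendstoUniformly_iff]
  intro ε hε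
  filter_upwards [hbound.eventually_lt_const hε] with m hm x
  rw [dist_comm]
  exact (dist_le_of_le_geometric_of_tendsto r C hr₁ (hF · x) (hlim x) m).trans_lt hm

theorem dist_le_geometric_of_abs_sub_le_exp {f : ℝ → ℝ} {T β C τ : ℝ} (hT : 0 ≤ T) (hβ : 0 ≤ β)
    (hC : 0 ≤ C) (hτ : 0 ≤ τ) (hf : ∀ w, 0 ≤ w → |f (w + T) - f w| ≤ C * exp (-(β * w)))
    (m : ℕ) : dist (f (m * T + τ)) (f ((m + 1 : ℕ) * T + τ)) ≤ C * exp (-(β * T)) ^ m := by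
  rw [dist_comm, Real.dist_eq, ← exp_nat_mul]
  calc |f ((m + 1 : ℕ) * T + τ) - f (m * T + τ)|
      ≤ C * exp (-(β * (m * T + τ))) := by
        convert hf (m * T + τ) (by positivity) using 4
        push_cast
        ring
    _ ≤ C * exp (m * -(β * T)) := by
        gcongr
        nlinarith [mul_nonneg hβ hτ]

theorem eq_of_tendsto_of_tendsto_add_period {X : Type*} [TopologicalSpace X] [T2Space X]
    {f : ℝ → X} {T : ℝ} {a b : X} (ha : Tendsto (fun m : ℕ => f (m * T)) atTop (𝓝 a))
    (hb : Tendsto (fun m : ℕ => f (m * T + T)) atTop (𝓝 b)) : a = b := by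
  refine tendsto_nhds_unique (ha.comp (tendsto_add_atTop_nat 1)) (hb.congr fun m => ?_)
  simp only [Function.comp_apply, Nat.cast_add, Nat.cast_one, add_mul, one_mul]

/-- The long-run convergence step in the proof of Lemma 1 (periodic case): a bounded
uniformly continuous viscosity solution `v` of a `T_p`-periodic, `β`-monotone Cauchy problem
satisfies `sup_z |v(z, w + T_p) − v(z, w)| ≤ 2 M e^{−β w}`, so for each `τ ∈ [0, T_p]` the
functions `z ↦ v(z, m T_p + τ)` converge uniformly as `m → ∞`, and the limit is
`T_p`-periodic in the sense `h(z, 0) = h(z, T_p)`. -/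
theorem stmt_19 (Tp β M : ℝ) (hTp : 0 < Tp) (hβ : 0 < β) (hM : 0 ≤ M)
    (H : (ℝ × ℝ) → ℝ → ℝ → ℝ) (hH : SatisfiesR1R2 H)
    (hper : ∀ (z t u p : ℝ), H (z, t + Tp) u p = H (z, t) u p)
    (hmono : ∀ (y : ℝ × ℝ) (p r s : ℝ), s ≤ r → β * (r - s) ≤ H y r p - H y s p)
    (v : ℝ × ℝ → ℝ)
    (hvb : ∀ p ∈ (univ ×ˢ Ici (0 : ℝ) : Set (ℝ × ℝ)), |v p| ≤ M)
    (hvc : UniformContinuousOn v (univ ×ˢ Ici (0 : ℝ)))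
    (hsol : IsViscositySolnOn (fun y q p => p.2 + H y q p.1) v (univ ×ˢ Ioi (0 : ℝ))) :
    (∀ w : ℝ, 0 ≤ w → ∀ z : ℝ,
      |v (z, w + Tp) - v (z, w)| ≤ 2 * M * Real.exp (-(β * w))) ∧
    ∃ h : ℝ → ℝ → ℝ,
      (∀ τ ∈ Icc (0 : ℝ) Tp,
        TendstoUniformly (fun (m : ℕ) (z : ℝ) => v (z, m * Tp + τ)) (fun z => h z τ)
          atTop) ∧
      ∀ z : ℝ, h z 0 = h z Tp := by
  obtain ⟨-, ω, hω, hHω, -⟩ := hH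
  have hdecay : ∀ w : ℝ, 0 ≤ w → ∀ z : ℝ,
      |v (z, w + Tp) - v (z, w)| ≤ 2 * M * Real.exp (-(β * w)) := fun w hw z =>
    abs_sub_time_shift_le_of_periodic hTp.le hβ hM hω hHω hper hmono hvb hvc hsol hw z
  have hconv : ∀ τ ∈ Icc (0 : ℝ) Tp,
      TendstoUniformly (fun (m : ℕ) (z : ℝ) => v (z, m * Tp + τ))
        (fun z => limUnder atTop fun m : ℕ => v (z, m * Tp + τ)) atTop := fun τ hτ =>
    tendstoUniformly_limUnder_of_dist_le_geometric (exp_pos _).le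
      (exp_lt_one_iff.mpr (by nlinarith))
      fun m z => dist_le_geometric_of_abs_sub_le_exp (f := fun t => v (z, t)) hTp.le hβ.le
        (by positivity) hτ.1 (fun w hw => hdecay w hw z) m
  refine ⟨hdecay, fun z τ => limUnder atTop fun m : ℕ => v (z, m * Tp + τ), hconv, fun z => ?_⟩
  exact eq_of_tendsto_of_tendsto_add_period (f := fun t => v (z, t))
    (by simpa using (hconv 0 ⟨le_rfl, hTp.le⟩).tendsto_at z)
    ((hconv Tp ⟨hTp.le, le_rfl⟩).tendsto_at z)
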